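/- arXiv:2111.13446 — 5 statements merged into one kernel-verified Lean document; each statement's English description precedes it below -/
import Mathlib

section
/- Let n ≥ 2 and let ℓ ≥ 2 be an integer. Then for every vector η ∈ ℝⁿ with ‖η‖ ≤ ℓ there exist unit vectors ω₁, …, ω_ℓ ∈ ℝⁿ such that ω₁ + ω₂ + ⋯ + ω_ℓ = η. -/
/-! Two unit vectors realise every `x` with `‖x‖ ≤ 2`: take `x / 2 ± t v` with `v` a unit vector
orthogonal to `x` and `t = √(1 - ‖x‖² / 4)`, which is where dimension at least two is needed.
For more summands, peel off the unit vector `u` in the direction of `x`: then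
`‖x - u‖ = |‖x‖ - 1|`, so `‖x‖ ≤ k + 1` leaves a remainder of norm at most `k`. -/

open Module RealInnerProductSpace

variable {E : Type*} [NormedAddCommGroup E] [InnerProductSpace ℝ E]

theorem exists_norm_eq_one_inner_eq_zero [FiniteDimensional ℝ E] (hE : 2 ≤ finrank ℝ E)
    (x : E) : ∃ v : E, ‖v‖ = 1 ∧ ⟪v, x⟫ = 0 := by
  have hspan : finrank ℝ (ℝ ∙ x) ≤ 1 := by
    simpa using finrank_span_le_card (R := ℝ) ({x} : Set E)
  have hsum := (ℝ ∙ x).finrank_add_finrank_orthogonal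
  have : Nontrivial (ℝ ∙ x)ᗮ := Module.nontrivial_of_finrank_pos (R := ℝ) (by omega)
  obtain ⟨⟨v, hvx⟩, hv⟩ := exists_ne (0 : (ℝ ∙ x)ᗮ)
  have hv : v ≠ 0 := by simpa using hv
  refine ⟨‖v‖⁻¹ • v, norm_smul_inv_norm hv, ?_⟩
  rw [real_inner_smul_left, Submodule.mem_orthogonal_singleton_iff_inner_left.mp hvx, mul_zero]

theorem exists_add_eq_of_norm_le_two [FiniteDimensional ℝ E] (hE : 2 ≤ finrank ℝ E)
    {x : E} (hx : ‖x‖ ≤ 2) : ∃ a b : E, ‖a‖ = 1 ∧ ‖b‖ = 1 ∧ a + b = x := by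
  obtain ⟨v, hv, hvx⟩ := exists_norm_eq_one_inner_eq_zero hE x
  set t := √(1 - ‖x‖ ^ 2 / 4)
  have ht : t ^ 2 = 1 - ‖x‖ ^ 2 / 4 := Real.sq_sqrt (by nlinarith [norm_nonneg x])
  have horth : ⟪(1 / 2 : ℝ) • x, t • v⟫ = 0 := by
    rw [real_inner_smul_left, real_inner_smul_right, real_inner_comm, hvx]; ring
  have hsq : ‖(1 / 2 : ℝ) • x‖ ^ 2 + ‖t • v‖ ^ 2 = 1 := by
    rw [norm_smul, norm_smul, hv, mul_pow, mul_pow, Real.norm_eq_abs, Real.norm_eq_abs, sq_abs,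
      sq_abs, ht]
    ring
  refine ⟨(1 / 2 : ℝ) • x + t • v, (1 / 2 : ℝ) • x - t • v, ?_, ?_, by module⟩
  · rw [← pow_eq_one_iff_of_nonneg (norm_nonneg _) two_ne_zero,
      norm_add_sq_real, horth, mul_zero, add_zero, hsq]
  · rw [← pow_eq_one_iff_of_nonneg (norm_nonneg _) two_ne_zero,
      norm_sub_sq_real, horth, mul_zero, sub_zero, hsq]

theorem exists_norm_eq_one_norm_sub_eq_abs [Nontrivial E] (x : E) :
    ∃ u : E, ‖u‖ = 1 ∧ ‖x - u‖ = |‖x‖ - 1| := by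
  rcases eq_or_ne x 0 with rfl | hx
  · obtain ⟨u, hu⟩ := exists_norm_eq E zero_le_one
    exact ⟨u, hu, by simp [hu]⟩
  refine ⟨‖x‖⁻¹ • x, norm_smul_inv_norm hx, ?_⟩
  have hpos : 0 < ‖x‖ := norm_pos_iff.mpr hx
  calc ‖x - ‖x‖⁻¹ • x‖ = ‖(1 - ‖x‖⁻¹) • x‖ := by rw [sub_smul, one_smul]
    _ = |1 - ‖x‖⁻¹| * ‖x‖ := by rw [norm_smul, Real.norm_eq_abs]
    _ = |‖x‖ - 1| := by
        rw [← abs_of_pos hpos, ← abs_mul, abs_of_pos hpos, sub_mul, inv_mul_cancel₀ hpos.ne',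
          one_mul, abs_sub_comm]

theorem exists_sum_norm_eq_one_eq_of_norm_le [FiniteDimensional ℝ E] (hE : 2 ≤ finrank ℝ E)
    {k : ℕ} (hk : 2 ≤ k) {x : E} (hx : ‖x‖ ≤ k) :
    ∃ ω : Fin k → E, (∀ j, ‖ω j‖ = 1) ∧ ∑ j, ω j = x := by
  induction k, hk using Nat.le_induction generalizing x with
  | base =>
    obtain ⟨a, b, ha, hb, hab⟩ := exists_add_eq_of_norm_le_two hE (by exact_mod_cast hx)
    exact ⟨![a, b], Fin.forall_fin_two.mpr ⟨ha, hb⟩, by simpa using hab⟩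
  | succ k hk ih =>
    have : Nontrivial E := Module.nontrivial_of_finrank_pos (R := ℝ) (by omega)
    obtain ⟨u, hu, hxu⟩ := exists_norm_eq_one_norm_sub_eq_abs x
    have hk' : (2 : ℝ) ≤ k := by exact_mod_cast hk
    have hrest : ‖x - u‖ ≤ k := by
      push_cast at hx
      rw [hxu, abs_le]
      constructor <;> linarith [norm_nonneg x]
    obtain ⟨ω, hω, hωx⟩ := ih hrest
    refine ⟨Fin.cons u ω, Fin.cases hu hω, ?_⟩
    rw [Fin.sum_cons, hωx, add_sub_cancel]

/-- Let n ≥ 2 and let ℓ ≥ 2 be an integer. Then for every vector η ∈ ℝⁿ with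
‖η‖ ≤ ℓ there exist unit vectors ω₁, …, ω_ℓ ∈ ℝⁿ such that ω₁ + ω₂ + ⋯ + ω_ℓ = η. -/
theorem unit_vector_decomposition (n ℓ : ℕ) (hn : 2 ≤ n) (hℓ : 2 ≤ ℓ)
    (η : EuclideanSpace ℝ (Fin n)) (hη : ‖η‖ ≤ (ℓ : ℝ)) :
    ∃ ω : Fin ℓ → EuclideanSpace ℝ (Fin n),
      (∀ j, ‖ω j‖ = 1) ∧ ∑ j, ω j = η :=
  exists_sum_norm_eq_one_eq_of_norm_le (by simpa using hn) hℓ hη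
end

section
/- Let n ≥ 2, let m ≥ 2 be an even integer, let k > 0, and let ξ ∈ ℝⁿ with 0 < ‖ξ‖ ≤ (m+1)k. Set e₁ = ξ/‖ξ‖ and let e₂ ∈ ℝⁿ be a unit vector with ⟨e₁, e₂⟩ = 0. Define ζ₁ = (1/m)(−k + ‖ξ‖)·e₁ + (1/m)·√((m²−1)k² + 2k‖ξ‖ − ‖ξ‖²)·e₂, ζ₂ = (1/m)(−k + ‖ξ‖)·e₁ − (1/m)·√((m²−1)k² + 2k‖ξ‖ − ‖ξ‖²)·e₂, and ζ₃ = k·e₁. Then (m²−1)k² + 2k‖ξ‖ − ‖ξ‖² ≥ 0, ‖ζ₁‖ = ‖ζ₂‖ = ‖ζ₃‖ = k, and (m/2)·ζ₁ + (m/2)·ζ₂ + ζ₃ = ξ. -/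
open scoped RealInnerProductSpace

/-!
The e₁-coefficient (‖ξ‖ - k)/m is forced by the sum: the e₂-components of ζ₁ and ζ₂
cancel, so m such vectors plus ζ₃ = k e₁ add up to ‖ξ‖ e₁ = ξ. The e₂-coefficient is
then forced by ‖ζ₁‖ = k, since (‖ξ‖ - k)² + D = m²k² for the discriminant D, and D is
nonnegative because it factors as ((m + 1)k - ‖ξ‖)(‖ξ‖ + (m - 1)k).
-/

lemma discriminant_nonneg {m k r : ℝ} (hm : 1 ≤ m) (hk : 0 ≤ k) (hr₀ : 0 ≤ r)
    (hr : r ≤ (m + 1) * k) : 0 ≤ (m ^ 2 - 1) * k ^ 2 + 2 * k * r - r ^ 2 := by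
  have hfactor : (m ^ 2 - 1) * k ^ 2 + 2 * k * r - r ^ 2 =
      ((m + 1) * k - r) * (r + (m - 1) * k) := by
    ring
  rw [hfactor]
  exact mul_nonneg (sub_nonneg.mpr hr) (by nlinarith)

lemma sq_add_sq_of_discriminant {m k r : ℝ} (hm : m ≠ 0)
    (hD : 0 ≤ (m ^ 2 - 1) * k ^ 2 + 2 * k * r - r ^ 2) :
    (1 / m * (-k + r)) ^ 2 + (1 / m * √((m ^ 2 - 1) * k ^ 2 + 2 * k * r - r ^ 2)) ^ 2 =
      k ^ 2 := by
  rw [mul_pow, mul_pow, Real.sq_sqrt hD]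
  field_simp
  ring

lemma norm_smul_add_smul_of_orthonormal {E : Type*} [NormedAddCommGroup E]
    [InnerProductSpace ℝ E] {e₁ e₂ : E} (he₁ : ‖e₁‖ = 1) (he₂ : ‖e₂‖ = 1) (h : ⟪e₁, e₂⟫ = 0)
    (a b : ℝ) :
    ‖a • e₁ + b • e₂‖ = √(a ^ 2 + b ^ 2) := by
  have horth : ⟪a • e₁, b • e₂⟫ = 0 := by
    rw [real_inner_smul_left, real_inner_smul_right, h, mul_zero, mul_zero]
  rw [← Real.sqrt_sq (norm_nonneg _), sq, norm_add_sq_eq_norm_sq_add_norm_sq_real horth,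
    norm_smul, norm_smul, he₁, he₂, Real.norm_eq_abs, Real.norm_eq_abs]
  congr 1
  simp only [mul_one, abs_mul_abs_self, sq]

theorem waveVectors_even_case_general (n m : ℕ) (hm : 2 ≤ m)
    (k : ℝ) (hk : 0 < k) (ξ : EuclideanSpace ℝ (Fin n))
    (hξ0 : 0 < ‖ξ‖) (hξ : ‖ξ‖ ≤ ((m : ℝ) + 1) * k)
    (e₁ e₂ : EuclideanSpace ℝ (Fin n)) (he₁ : e₁ = ‖ξ‖⁻¹ • ξ)
    (he₂ : ‖e₂‖ = 1) (horth : ⟪e₁, e₂⟫ = 0)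
    (ζ₁ ζ₂ ζ₃ : EuclideanSpace ℝ (Fin n))
    (hζ₁ : ζ₁ = ((1 : ℝ) / m * (-k + ‖ξ‖)) • e₁ +
      ((1 : ℝ) / m * Real.sqrt (((m : ℝ) ^ 2 - 1) * k ^ 2 + 2 * k * ‖ξ‖ - ‖ξ‖ ^ 2)) • e₂)
    (hζ₂ : ζ₂ = ((1 : ℝ) / m * (-k + ‖ξ‖)) • e₁ -
      ((1 : ℝ) / m * Real.sqrt (((m : ℝ) ^ 2 - 1) * k ^ 2 + 2 * k * ‖ξ‖ - ‖ξ‖ ^ 2)) • e₂)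
    (hζ₃ : ζ₃ = k • e₁) :
    0 ≤ ((m : ℝ) ^ 2 - 1) * k ^ 2 + 2 * k * ‖ξ‖ - ‖ξ‖ ^ 2 ∧
      ‖ζ₁‖ = k ∧ ‖ζ₂‖ = k ∧ ‖ζ₃‖ = k ∧
      ((m : ℝ) / 2) • ζ₁ + ((m : ℝ) / 2) • ζ₂ + ζ₃ = ξ := by
  have hm₁ : (1 : ℝ) ≤ m := by exact_mod_cast (by omega : 1 ≤ m)
  have hm₀ : (m : ℝ) ≠ 0 := by positivity
  have hD := discriminant_nonneg hm₁ hk.le (norm_nonneg ξ) hξ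
  have hcoeffs := sq_add_sq_of_discriminant hm₀ hD
  have he₁n : ‖e₁‖ = 1 := he₁ ▸ norm_smul_inv_norm (norm_pos_iff.mp hξ0)
  refine ⟨hD, ?_, ?_, ?_, ?_⟩
  · rw [hζ₁, norm_smul_add_smul_of_orthonormal he₁n he₂ horth, hcoeffs, Real.sqrt_sq hk.le]
  · rw [hζ₂, sub_eq_add_neg, ← neg_smul, norm_smul_add_smul_of_orthonormal he₁n he₂ horth,
      neg_sq, hcoeffs, Real.sqrt_sq hk.le]
  · rw [hζ₃, norm_smul, he₁n, mul_one, Real.norm_of_nonneg hk.le]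
  · calc ((m : ℝ) / 2) • ζ₁ + ((m : ℝ) / 2) • ζ₂ + ζ₃ = ‖ξ‖ • e₁ := by
          rw [hζ₁, hζ₂, hζ₃]
          match_scalars
          · field_simp
            ring
          · ring
      _ = ξ := by rw [he₁, smul_inv_smul₀ hξ0.ne']

/-- the explicit wave vectors for even m (equation (2.6), Case 1 of Thm 2.2):
for 0 < ‖ξ‖ ≤ (m+1)k the vectors ζ₁, ζ₂, ζ₃ all have length k and
(m/2)·ζ₁ + (m/2)·ζ₂ + ζ₃ = ξ; moreover the discriminant is nonnegative. -/
theorem waveVectors_even_case (n m : ℕ) (hn : 2 ≤ n) (hm : 2 ≤ m) (hme : Even m)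
    (k : ℝ) (hk : 0 < k) (ξ : EuclideanSpace ℝ (Fin n))
    (hξ0 : 0 < ‖ξ‖) (hξ : ‖ξ‖ ≤ ((m : ℝ) + 1) * k)
    (e₁ e₂ : EuclideanSpace ℝ (Fin n)) (he₁ : e₁ = ‖ξ‖⁻¹ • ξ)
    (he₂ : ‖e₂‖ = 1) (horth : ⟪e₁, e₂⟫ = 0)
    (ζ₁ ζ₂ ζ₃ : EuclideanSpace ℝ (Fin n))
    (hζ₁ : ζ₁ = ((1 : ℝ) / m * (-k + ‖ξ‖)) • e₁ +
      ((1 : ℝ) / m * Real.sqrt (((m : ℝ) ^ 2 - 1) * k ^ 2 + 2 * k * ‖ξ‖ - ‖ξ‖ ^ 2)) • e₂)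
    (hζ₂ : ζ₂ = ((1 : ℝ) / m * (-k + ‖ξ‖)) • e₁ -
      ((1 : ℝ) / m * Real.sqrt (((m : ℝ) ^ 2 - 1) * k ^ 2 + 2 * k * ‖ξ‖ - ‖ξ‖ ^ 2)) • e₂)
    (hζ₃ : ζ₃ = k • e₁) :
    0 ≤ ((m : ℝ) ^ 2 - 1) * k ^ 2 + 2 * k * ‖ξ‖ - ‖ξ‖ ^ 2 ∧
      ‖ζ₁‖ = k ∧ ‖ζ₂‖ = k ∧ ‖ζ₃‖ = k ∧
      ((m : ℝ) / 2) • ζ₁ + ((m : ℝ) / 2) • ζ₂ + ζ₃ = ξ :=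
  waveVectors_even_case_general n m hm k hk ξ hξ0 hξ e₁ e₂ he₁ he₂ horth ζ₁ ζ₂ ζ₃ hζ₁ hζ₂ hζ₃
end

section
/- Let n ≥ 2, let k > 0, and let ξ ∈ ℝⁿ with 0 < ‖ξ‖ ≤ 3k. Set e₁ = ξ/‖ξ‖ and let e₂ ∈ ℝⁿ be a unit vector with ⟨e₁, e₂⟩ = 0. Define ζ₁ = (1/2)(−k + ‖ξ‖)·e₁ − (1/2)·√(3k² + 2k‖ξ‖ − ‖ξ‖²)·e₂, ζ₂ = (1/2)(−k + ‖ξ‖)·e₁ + (1/2)·√(3k² + 2k‖ξ‖ − ‖ξ‖²)·e₂, and ζ₃ = k·e₁. Then 3k² + 2k‖ξ‖ − ‖ξ‖² ≥ 0, ‖ζ₁‖ = ‖ζ₂‖ = ‖ζ₃‖ = k, and ζ₁ + ζ₂ + ζ₃ = ξ. -/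
open scoped RealInnerProductSpace

/-!
With `s = ‖ξ‖`, the vectors `ζ₁, ζ₂` are `a • e₁ ∓ b • e₂` for `a = (s - k) / 2` and
`b = √(3k² + 2ks - s²) / 2`, and `a² + b² = k²`, so Pythagoras in the orthonormal pair
`e₁, e₂` gives them length `k`. The discriminant is `(3k - s)(k + s) ≥ 0`, and the
`e₂`-components cancel in the sum, leaving `((s - k) + k) • e₁ = s • e₁ = ξ`.
-/

lemma discriminant_nonneg_of_le_three_mul {k s : ℝ} (hs : 0 ≤ s) (hsk : s ≤ 3 * k) :
    0 ≤ 3 * k ^ 2 + 2 * k * s - s ^ 2 := by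
  have hfactor : 3 * k ^ 2 + 2 * k * s - s ^ 2 = (3 * k - s) * (k + s) := by ring
  rw [hfactor]
  exact mul_nonneg (by linarith) (by linarith)

lemma half_sq_add_half_sqrt_discriminant_sq {k s : ℝ}
    (hdisc : 0 ≤ 3 * k ^ 2 + 2 * k * s - s ^ 2) :
    ((1 : ℝ) / 2 * (-k + s)) ^ 2 + ((1 : ℝ) / 2 * √(3 * k ^ 2 + 2 * k * s - s ^ 2)) ^ 2
      = k ^ 2 := by
  rw [mul_pow _ √_, Real.sq_sqrt hdisc]
  ring

section Orthonormal

variable {E : Type*} [NormedAddCommGroup E] [InnerProductSpace ℝ E] {u v : E}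

lemma norm_smul_add_smul_of_orthonormal_s7 (hu : ‖u‖ = 1) (hv : ‖v‖ = 1) (huv : ⟪u, v⟫ = 0)
    {a b r : ℝ} (hr : 0 ≤ r) (hab : a ^ 2 + b ^ 2 = r ^ 2) : ‖a • u + b • v‖ = r := by
  have horth : ⟪a • u, b • v⟫ = 0 := by
    rw [real_inner_smul_left, real_inner_smul_right, huv, mul_zero, mul_zero]
  have hsq : ‖a • u + b • v‖ ^ 2 = r ^ 2 := by
    rw [sq, norm_add_sq_eq_norm_sq_add_norm_sq_real horth, norm_smul, norm_smul, hu, hv,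
      Real.norm_eq_abs, Real.norm_eq_abs, mul_one, mul_one, abs_mul_abs_self,
      abs_mul_abs_self, ← hab, sq, sq]
  exact (sq_eq_sq₀ (norm_nonneg _) hr).mp hsq

lemma norm_smul_sub_smul_of_orthonormal (hu : ‖u‖ = 1) (hv : ‖v‖ = 1) (huv : ⟪u, v⟫ = 0)
    {a b r : ℝ} (hr : 0 ≤ r) (hab : a ^ 2 + b ^ 2 = r ^ 2) : ‖a • u - b • v‖ = r := by
  rw [sub_eq_add_neg, ← neg_smul]
  exact norm_smul_add_smul_of_orthonormal_s7 hu hv huv hr (by rwa [neg_sq])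

end Orthonormal

theorem waveVectors_quadratic_case_general (n : ℕ)
    (k : ℝ) (hk : 0 < k) (ξ : EuclideanSpace ℝ (Fin n))
    (hξ0 : 0 < ‖ξ‖) (hξ : ‖ξ‖ ≤ 3 * k)
    (e₁ e₂ : EuclideanSpace ℝ (Fin n)) (he₁ : e₁ = ‖ξ‖⁻¹ • ξ)
    (he₂ : ‖e₂‖ = 1) (horth : ⟪e₁, e₂⟫ = 0)
    (ζ₁ ζ₂ ζ₃ : EuclideanSpace ℝ (Fin n))
    (hζ₁ : ζ₁ = ((1 : ℝ) / 2 * (-k + ‖ξ‖)) • e₁ -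
      ((1 : ℝ) / 2 * Real.sqrt (3 * k ^ 2 + 2 * k * ‖ξ‖ - ‖ξ‖ ^ 2)) • e₂)
    (hζ₂ : ζ₂ = ((1 : ℝ) / 2 * (-k + ‖ξ‖)) • e₁ +
      ((1 : ℝ) / 2 * Real.sqrt (3 * k ^ 2 + 2 * k * ‖ξ‖ - ‖ξ‖ ^ 2)) • e₂)
    (hζ₃ : ζ₃ = k • e₁) :
    0 ≤ 3 * k ^ 2 + 2 * k * ‖ξ‖ - ‖ξ‖ ^ 2 ∧
      ‖ζ₁‖ = k ∧ ‖ζ₂‖ = k ∧ ‖ζ₃‖ = k ∧ ζ₁ + ζ₂ + ζ₃ = ξ := by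
  have hdisc := discriminant_nonneg_of_le_three_mul hξ0.le hξ
  have hpyth := half_sq_add_half_sqrt_discriminant_sq hdisc
  have he₁_norm : ‖e₁‖ = 1 := he₁ ▸ norm_smul_inv_norm (norm_pos_iff.mp hξ0)
  refine ⟨hdisc, ?_, ?_, ?_, ?_⟩
  · rw [hζ₁]
    exact norm_smul_sub_smul_of_orthonormal he₁_norm he₂ horth hk.le hpyth
  · rw [hζ₂]
    exact norm_smul_add_smul_of_orthonormal_s7 he₁_norm he₂ horth hk.le hpyth
  · rw [hζ₃, norm_smul, he₁_norm, mul_one, Real.norm_of_nonneg hk.le]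
  · have hsum : ζ₁ + ζ₂ + ζ₃ = ‖ξ‖ • e₁ := by
      rw [hζ₁, hζ₂, hζ₃]
      module
    rw [hsum, he₁, smul_inv_smul₀ hξ0.ne']

/-- the explicit triple of wave vectors from the proof of Theorem 3.1 (m = 2):
for 0 < ‖ξ‖ ≤ 3k the vectors ζ₁, ζ₂, ζ₃ all have length k and ζ₁ + ζ₂ + ζ₃ = ξ;
moreover the discriminant 3k² + 2k‖ξ‖ − ‖ξ‖² is nonnegative. -/
theorem waveVectors_quadratic_case (n : ℕ) (hn : 2 ≤ n)
    (k : ℝ) (hk : 0 < k) (ξ : EuclideanSpace ℝ (Fin n))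
    (hξ0 : 0 < ‖ξ‖) (hξ : ‖ξ‖ ≤ 3 * k)
    (e₁ e₂ : EuclideanSpace ℝ (Fin n)) (he₁ : e₁ = ‖ξ‖⁻¹ • ξ)
    (he₂ : ‖e₂‖ = 1) (horth : ⟪e₁, e₂⟫ = 0)
    (ζ₁ ζ₂ ζ₃ : EuclideanSpace ℝ (Fin n))
    (hζ₁ : ζ₁ = ((1 : ℝ) / 2 * (-k + ‖ξ‖)) • e₁ -
      ((1 : ℝ) / 2 * Real.sqrt (3 * k ^ 2 + 2 * k * ‖ξ‖ - ‖ξ‖ ^ 2)) • e₂)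
    (hζ₂ : ζ₂ = ((1 : ℝ) / 2 * (-k + ‖ξ‖)) • e₁ +
      ((1 : ℝ) / 2 * Real.sqrt (3 * k ^ 2 + 2 * k * ‖ξ‖ - ‖ξ‖ ^ 2)) • e₂)
    (hζ₃ : ζ₃ = k • e₁) :
    0 ≤ 3 * k ^ 2 + 2 * k * ‖ξ‖ - ‖ξ‖ ^ 2 ∧
      ‖ζ₁‖ = k ∧ ‖ζ₂‖ = k ∧ ‖ζ₃‖ = k ∧ ζ₁ + ζ₂ + ζ₃ = ξ :=
  waveVectors_quadratic_case_general n k hk ξ hξ0 hξ e₁ e₂ he₁ he₂ horth ζ₁ ζ₂ ζ₃ hζ₁ hζ₂ hζ₃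
end

section
/- Let n ≥ 2, let m ≥ 2 be an integer, let k > 0, and let ξ ∈ ℝⁿ with (m−1)k ≤ ‖ξ‖ ≤ (m+1)k and ‖ξ‖ > 0. Set e₁ = ξ/‖ξ‖, let e₂ ∈ ℝⁿ be a unit vector with ⟨e₁, e₂⟩ = 0, and set Σ = √(−(m²−1)²k⁴ + 2(m²+1)k²‖ξ‖² − ‖ξ‖⁴). Define μ₁ = (((m²−1)k² + ‖ξ‖²)/(2m‖ξ‖))·e₁ − (Σ/(2m‖ξ‖))·e₂ and μ₂ = ((−(m²−1)k² + ‖ξ‖²)/(2‖ξ‖))·e₁ + (Σ/(2‖ξ‖))·e₂. Then −(m²−1)²k⁴ + 2(m²+1)k²‖ξ‖² − ‖ξ‖⁴ ≥ 0, ‖μ₁‖ = k, ‖μ₂‖ = k, and m·μ₁ + μ₂ = ξ. -/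
/-!
Both wave vectors lie in the plane spanned by the orthonormal pair `e₁, e₂`, so their lengths are
computed by Pythagoras. The discriminant factors as
`(((m + 1) k)² - ‖ξ‖²) (‖ξ‖² - ((m - 1) k)²)`, which is where the window
`(m - 1) k ≤ ‖ξ‖ ≤ (m + 1) k` comes from, and adding the square of either `e₁`-coordinate
numerator to it gives a perfect square.
-/

open scoped RealInnerProductSpace

/-- The radicand `Σ²` of the paper, as a function of `m`, `k` and `t = ‖ξ‖`. -/
def waveDiscriminant (m k t : ℝ) : ℝ :=
  -((m ^ 2 - 1) ^ 2 * k ^ 4) + 2 * (m ^ 2 + 1) * k ^ 2 * t ^ 2 - t ^ 4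

section WaveDiscriminant

variable (m k t : ℝ)

lemma waveDiscriminant_eq_mul :
    waveDiscriminant m k t = (((m + 1) * k) ^ 2 - t ^ 2) * (t ^ 2 - ((m - 1) * k) ^ 2) := by
  unfold waveDiscriminant; ring

lemma waveDiscriminant_nonneg {m k t : ℝ} (hmk : 0 ≤ (m - 1) * k) (hl : (m - 1) * k ≤ t)
    (hu : t ≤ (m + 1) * k) : 0 ≤ waveDiscriminant m k t := by
  rw [waveDiscriminant_eq_mul]
  exact mul_nonneg (sub_nonneg.2 (pow_le_pow_left₀ (hmk.trans hl) hu 2))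
    (sub_nonneg.2 (pow_le_pow_left₀ hmk hl 2))

lemma sq_add_waveDiscriminant_of_first :
    ((m ^ 2 - 1) * k ^ 2 + t ^ 2) ^ 2 + waveDiscriminant m k t = (k * (2 * m * t)) ^ 2 := by
  unfold waveDiscriminant; ring

lemma sq_add_waveDiscriminant_of_second :
    (-(m ^ 2 - 1) * k ^ 2 + t ^ 2) ^ 2 + waveDiscriminant m k t = (k * (2 * t)) ^ 2 := by
  unfold waveDiscriminant; ring

end WaveDiscriminant

lemma div_sq_add_div_sq_eq {a b c k : ℝ} (hc : c ≠ 0) (h : a ^ 2 + b ^ 2 = (k * c) ^ 2) :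
    (a / c) ^ 2 + (b / c) ^ 2 = k ^ 2 := by
  rw [div_pow, div_pow, ← add_div, h, mul_pow, mul_div_cancel_right₀ _ (pow_ne_zero 2 hc)]

lemma norm_smul_add_smul_eq {E : Type*} [NormedAddCommGroup E] [InnerProductSpace ℝ E]
    {e₁ e₂ : E} (h₁ : ‖e₁‖ = 1) (h₂ : ‖e₂‖ = 1) (h : ⟪e₁, e₂⟫ = 0) {a b k : ℝ} (hk : 0 ≤ k)
    (hab : a ^ 2 + b ^ 2 = k ^ 2) : ‖a • e₁ + b • e₂‖ = k := by
  have horth : ⟪a • e₁, b • e₂⟫ = 0 := by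
    rw [real_inner_smul_left, real_inner_smul_right, h, mul_zero, mul_zero]
  rw [← sq_eq_sq₀ (norm_nonneg _) hk, ← hab, sq, sq, sq,
    norm_add_sq_eq_norm_sq_add_norm_sq_real horth, norm_smul, norm_smul, h₁, h₂,
    Real.norm_eq_abs, Real.norm_eq_abs, mul_one, mul_one, abs_mul_abs_self, abs_mul_abs_self]

theorem waveVectors_general_m_general (n m : ℕ) (hm : 2 ≤ m)
    (k : ℝ) (hk : 0 < k) (ξ : EuclideanSpace ℝ (Fin n)) (hξ0 : 0 < ‖ξ‖)
    (hξl : ((m : ℝ) - 1) * k ≤ ‖ξ‖) (hξu : ‖ξ‖ ≤ ((m : ℝ) + 1) * k)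
    (e₁ e₂ : EuclideanSpace ℝ (Fin n)) (he₁ : e₁ = ‖ξ‖⁻¹ • ξ)
    (he₂ : ‖e₂‖ = 1) (horth : ⟪e₁, e₂⟫ = 0)
    (S : ℝ)
    (hS : S = Real.sqrt (-(((m : ℝ) ^ 2 - 1) ^ 2 * k ^ 4) +
      2 * ((m : ℝ) ^ 2 + 1) * k ^ 2 * ‖ξ‖ ^ 2 - ‖ξ‖ ^ 4))
    (μ₁ μ₂ : EuclideanSpace ℝ (Fin n))
    (hμ₁ : μ₁ = (((((m : ℝ) ^ 2 - 1) * k ^ 2 + ‖ξ‖ ^ 2)) / (2 * m * ‖ξ‖)) • e₁ -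
      (S / (2 * m * ‖ξ‖)) • e₂)
    (hμ₂ : μ₂ = (((-((m : ℝ) ^ 2 - 1) * k ^ 2 + ‖ξ‖ ^ 2)) / (2 * ‖ξ‖)) • e₁ +
      (S / (2 * ‖ξ‖)) • e₂) :
    0 ≤ -(((m : ℝ) ^ 2 - 1) ^ 2 * k ^ 4) +
        2 * ((m : ℝ) ^ 2 + 1) * k ^ 2 * ‖ξ‖ ^ 2 - ‖ξ‖ ^ 4 ∧
      ‖μ₁‖ = k ∧ ‖μ₂‖ = k ∧ (m : ℝ) • μ₁ + μ₂ = ξ := by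
  rw [← waveDiscriminant] at hS ⊢
  have hm1 : (1 : ℝ) ≤ m := by exact_mod_cast one_le_two.trans hm
  have hD := waveDiscriminant_nonneg (mul_nonneg (sub_nonneg.2 hm1) hk.le) hξl hξu
  have hS2 : S ^ 2 = waveDiscriminant m k ‖ξ‖ := by rw [hS, Real.sq_sqrt hD]
  have he₁n : ‖e₁‖ = 1 := by rw [he₁, norm_smul, norm_inv, norm_norm, inv_mul_cancel₀ hξ0.ne']
  have hξe : ξ = ‖ξ‖ • e₁ := by rw [he₁, smul_inv_smul₀ hξ0.ne']
  refine ⟨hD, ?_, ?_, ?_⟩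
  · rw [hμ₁, sub_eq_add_neg, ← smul_neg]
    refine norm_smul_add_smul_eq he₁n (by rw [norm_neg, he₂])
      (by rw [inner_neg_right, horth, neg_zero]) hk.le (div_sq_add_div_sq_eq (by positivity) ?_)
    rw [hS2, sq_add_waveDiscriminant_of_first]
  · rw [hμ₂]
    refine norm_smul_add_smul_eq he₁n he₂ horth hk.le (div_sq_add_div_sq_eq (by positivity) ?_)
    rw [hS2, sq_add_waveDiscriminant_of_second]
  · rw [hξe, hμ₁, hμ₂]
    match_scalars
    · field_simp
      ring
    · field_simp
      ring

/-- the wave vectors of equation (2.10) in the proof of Theorem 2.3: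
for (m−1)k ≤ ‖ξ‖ ≤ (m+1)k the real vectors μ₁, μ₂ have length k and m·μ₁ + μ₂ = ξ;
moreover the discriminant is nonnegative. -/
theorem waveVectors_general_m (n m : ℕ) (hn : 2 ≤ n) (hm : 2 ≤ m)
    (k : ℝ) (hk : 0 < k) (ξ : EuclideanSpace ℝ (Fin n)) (hξ0 : 0 < ‖ξ‖)
    (hξl : ((m : ℝ) - 1) * k ≤ ‖ξ‖) (hξu : ‖ξ‖ ≤ ((m : ℝ) + 1) * k)
    (e₁ e₂ : EuclideanSpace ℝ (Fin n)) (he₁ : e₁ = ‖ξ‖⁻¹ • ξ)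
    (he₂ : ‖e₂‖ = 1) (horth : ⟪e₁, e₂⟫ = 0)
    (S : ℝ)
    (hS : S = Real.sqrt (-(((m : ℝ) ^ 2 - 1) ^ 2 * k ^ 4) +
      2 * ((m : ℝ) ^ 2 + 1) * k ^ 2 * ‖ξ‖ ^ 2 - ‖ξ‖ ^ 4))
    (μ₁ μ₂ : EuclideanSpace ℝ (Fin n))
    (hμ₁ : μ₁ = (((((m : ℝ) ^ 2 - 1) * k ^ 2 + ‖ξ‖ ^ 2)) / (2 * m * ‖ξ‖)) • e₁ -
      (S / (2 * m * ‖ξ‖)) • e₂)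
    (hμ₂ : μ₂ = (((-((m : ℝ) ^ 2 - 1) * k ^ 2 + ‖ξ‖ ^ 2)) / (2 * ‖ξ‖)) • e₁ +
      (S / (2 * ‖ξ‖)) • e₂) :
    0 ≤ -(((m : ℝ) ^ 2 - 1) ^ 2 * k ^ 4) +
        2 * ((m : ℝ) ^ 2 + 1) * k ^ 2 * ‖ξ‖ ^ 2 - ‖ξ‖ ^ 4 ∧
      ‖μ₁‖ = k ∧ ‖μ₂‖ = k ∧ (m : ℝ) • μ₁ + μ₂ = ξ :=
  waveVectors_general_m_general n m hm k hk ξ hξ0 hξl hξu e₁ e₂ he₁ he₂ horth S hS μ₁ μ₂ hμ₁ hμ₂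
end

section
/- Let n ≥ 2, let m ≥ 2 be an even integer, let k > 0, D > 0, and let ξ ∈ ℝⁿ with ‖ξ‖ > (m+1)k. Set e₁ = ξ/‖ξ‖, let e₂ ∈ ℝⁿ be a unit vector with ⟨e₁, e₂⟩ = 0, and set Ξ = √(‖ξ‖² − 2k‖ξ‖ − (m²−1)k²). Define the complex vectors ζ₁ = (1/m)(−k + ‖ξ‖)·e₁ + (i/m)·Ξ·e₂ and ζ₂ = (1/m)(−k + ‖ξ‖)·e₁ − (i/m)·Ξ·e₂ in ℂⁿ, and ζ₃ = k·e₁. Then ‖ξ‖² − 2k‖ξ‖ − (m²−1)k² > 0; ζ₁·ζ₁ = ζ₂·ζ₂ = ζ₃·ζ₃ = k²; (m/2)·ζ₁ + (m/2)·ζ₂ + ζ₃ = ξ; and for every x ∈ ℝⁿ with ‖x‖ ≤ D/2 and each j ∈ {1, 2}, |exp(i Σ_{l=1}^{n} (ζ_j)_l x_l)| ≤ exp(DΞ/(2m)), while |exp(i Σ_{l=1}^{n} (ζ₃)_l x_l)| = 1. -/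
open scoped RealInnerProductSpace

/-!
Write a complex vector as `ζ = p + i q` with `p, q` real. Then the bilinear square is
`ζ·ζ = ‖p‖² - ‖q‖² + 2i⟪p, q⟫` and the plane wave has modulus `|e^{iζ·x}| = e^{-⟪q, x⟫}`.
Here `p = ((‖ξ‖ - k)/m) e₁` and `q = ±(Ξ/m) e₂` are orthogonal, and
`(‖ξ‖ - k)² - Ξ² = m²k²` by the choice of `Ξ`, so `ζ·ζ = k²`, while Cauchy–Schwarz gives
`-⟪q, x⟫ ≤ (Ξ/m)(D/2)`.
-/

open Complex

section ComplexifiedVectors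

variable {ι : Type*} [Fintype ι]

theorem ofReal_inner_eq_sum_mul (u v : EuclideanSpace ℝ ι) :
    ((⟪u, v⟫ : ℝ) : ℂ) = ∑ l, (u l : ℂ) * v l := by
  simp [PiLp.inner_apply, mul_comm]

theorem sum_ofReal_add_I_mul_sq (p q : EuclideanSpace ℝ ι) :
    ∑ l, ((p l : ℂ) + I * q l) ^ 2 =
      ((‖p‖ ^ 2 - ‖q‖ ^ 2 : ℝ) : ℂ) + 2 * I * (⟪p, q⟫ : ℝ) := by
  rw [← real_inner_self_eq_norm_sq, ← real_inner_self_eq_norm_sq, ofReal_sub,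
    ofReal_inner_eq_sum_mul, ofReal_inner_eq_sum_mul, ofReal_inner_eq_sum_mul, Finset.mul_sum,
    ← Finset.sum_sub_distrib, ← Finset.sum_add_distrib]
  refine Finset.sum_congr rfl fun l _ => ?_
  linear_combination (q l : ℂ) ^ 2 * I_sq

theorem sum_ofReal_add_I_mul_mul (p q x : EuclideanSpace ℝ ι) :
    ∑ l, ((p l : ℂ) + I * q l) * x l = (⟪p, x⟫ : ℝ) + I * (⟪q, x⟫ : ℝ) := by
  rw [ofReal_inner_eq_sum_mul, ofReal_inner_eq_sum_mul, Finset.mul_sum,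
    ← Finset.sum_add_distrib]
  exact Finset.sum_congr rfl fun l _ => by ring

theorem norm_exp_I_mul_sum_ofReal_add_I_mul_mul (p q x : EuclideanSpace ℝ ι) :
    ‖exp (I * ∑ l, ((p l : ℂ) + I * q l) * x l)‖ = Real.exp (-⟪q, x⟫) := by
  rw [sum_ofReal_add_I_mul_mul, norm_exp]
  congr 1
  simp

theorem norm_exp_I_mul_sum_ofReal_add_I_mul_mul_le (p q x : EuclideanSpace ℝ ι) :
    ‖exp (I * ∑ l, ((p l : ℂ) + I * q l) * x l)‖ ≤ Real.exp (‖q‖ * ‖x‖) := by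
  rw [norm_exp_I_mul_sum_ofReal_add_I_mul_mul, Real.exp_le_exp]
  exact (neg_le_abs _).trans (abs_real_inner_le_norm q x)

variable {e₁ e₂ : EuclideanSpace ℝ ι}

theorem sum_smul_add_I_mul_smul_sq (he₁ : ‖e₁‖ = 1) (he₂ : ‖e₂‖ = 1) (horth : ⟪e₁, e₂⟫ = 0)
    (α β : ℝ) : ∑ l, (((α • e₁) l : ℂ) + I * (β • e₂) l) ^ 2 = ((α ^ 2 - β ^ 2 : ℝ) : ℂ) := by
  rw [sum_ofReal_add_I_mul_sq, inner_smul_left, inner_smul_right, horth, norm_smul, norm_smul,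
    he₁, he₂, Real.norm_eq_abs, Real.norm_eq_abs, mul_one, mul_one, sq_abs, sq_abs]
  simp

theorem norm_exp_I_mul_sum_smul_add_I_mul_smul_mul_le (he₂ : ‖e₂‖ = 1) (α β : ℝ)
    {x : EuclideanSpace ℝ ι} {R : ℝ} (hx : ‖x‖ ≤ R) :
    ‖exp (I * ∑ l, (((α • e₁) l : ℂ) + I * (β • e₂) l) * x l)‖ ≤ Real.exp (|β| * R) := by
  refine (norm_exp_I_mul_sum_ofReal_add_I_mul_mul_le (α • e₁) (β • e₂) x).trans ?_
  rw [norm_smul, he₂, mul_one, Real.norm_eq_abs, Real.exp_le_exp]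
  exact mul_le_mul_of_nonneg_left hx (abs_nonneg β)

end ComplexifiedVectors

/-- The discriminant factors as `(t - (m + 1) k) (t + (m - 1) k)`. -/
theorem discriminant_pos {m k t : ℝ} (hm : 0 ≤ m) (hk : 0 ≤ k) (ht : (m + 1) * k < t) :
    0 < t ^ 2 - 2 * k * t - (m ^ 2 - 1) * k ^ 2 := by
  nlinarith [mul_pos (sub_pos.2 ht) (show 0 < t + (m - 1) * k by nlinarith [mul_nonneg hm hk])]

theorem sq_div_sub_sq_sqrt_discriminant_div {m k t : ℝ} (hm : m ≠ 0)
    (hdisc : 0 ≤ t ^ 2 - 2 * k * t - (m ^ 2 - 1) * k ^ 2) :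
    ((t - k) / m) ^ 2 - (Real.sqrt (t ^ 2 - 2 * k * t - (m ^ 2 - 1) * k ^ 2) / m) ^ 2 = k ^ 2 := by
  rw [div_pow, div_pow, Real.sq_sqrt hdisc]
  field_simp
  ring

theorem waveVectors_even_highFrequency_general (n m : ℕ) (hm : 2 ≤ m)
    (k D : ℝ) (hk : 0 < k) (ξ : EuclideanSpace ℝ (Fin n))
    (hξ : ((m : ℝ) + 1) * k < ‖ξ‖)
    (e₁ e₂ : EuclideanSpace ℝ (Fin n)) (he₁ : e₁ = ‖ξ‖⁻¹ • ξ)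
    (he₂ : ‖e₂‖ = 1) (horth : ⟪e₁, e₂⟫ = 0)
    (Ξ : ℝ) (hΞ : Ξ = Real.sqrt (‖ξ‖ ^ 2 - 2 * k * ‖ξ‖ - ((m : ℝ) ^ 2 - 1) * k ^ 2))
    (ζ₁ ζ₂ ζ₃ : Fin n → ℂ)
    (hζ₁ : ζ₁ = fun l => ((1 / (m : ℂ)) * (-(k : ℂ) + (‖ξ‖ : ℂ))) * (e₁ l : ℂ) +
      (Complex.I / (m : ℂ)) * (Ξ : ℂ) * (e₂ l : ℂ))
    (hζ₂ : ζ₂ = fun l => ((1 / (m : ℂ)) * (-(k : ℂ) + (‖ξ‖ : ℂ))) * (e₁ l : ℂ) -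
      (Complex.I / (m : ℂ)) * (Ξ : ℂ) * (e₂ l : ℂ))
    (hζ₃ : ζ₃ = fun l => ((k * e₁ l : ℝ) : ℂ)) :
    0 < ‖ξ‖ ^ 2 - 2 * k * ‖ξ‖ - ((m : ℝ) ^ 2 - 1) * k ^ 2 ∧
      (∑ l, ζ₁ l ^ 2 = (k : ℂ) ^ 2) ∧ (∑ l, ζ₂ l ^ 2 = (k : ℂ) ^ 2) ∧
      (∑ l, ζ₃ l ^ 2 = (k : ℂ) ^ 2) ∧
      (∀ l, ((m : ℂ) / 2) * ζ₁ l + ((m : ℂ) / 2) * ζ₂ l + ζ₃ l = (ξ l : ℂ)) ∧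
      (∀ x : EuclideanSpace ℝ (Fin n), ‖x‖ ≤ D / 2 →
        ‖Complex.exp (Complex.I * ∑ l, ζ₁ l * (x l : ℂ))‖ ≤
            Real.exp (D * Ξ / (2 * m)) ∧
          ‖Complex.exp (Complex.I * ∑ l, ζ₂ l * (x l : ℂ))‖ ≤
            Real.exp (D * Ξ / (2 * m)) ∧
          ‖Complex.exp (Complex.I * ∑ l, ζ₃ l * (x l : ℂ))‖ = 1) := by
  have hm0 : (m : ℝ) ≠ 0 := by positivity
  have hdisc := discriminant_pos (Nat.cast_nonneg m) hk.le hξ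
  have hξ0 : ‖ξ‖ ≠ 0 := (lt_of_le_of_lt (by positivity) hξ).ne'
  have he₁_norm : ‖e₁‖ = 1 := by rw [he₁, norm_smul, norm_inv, norm_norm, inv_mul_cancel₀ hξ0]
  have hζ₁' : ζ₁ = fun l => ((((‖ξ‖ - k) / m) • e₁) l : ℂ) + I * ((Ξ / m) • e₂) l := by
    rw [hζ₁]; funext l; simp only [PiLp.smul_apply, smul_eq_mul]; push_cast; ring
  have hζ₂' : ζ₂ = fun l => ((((‖ξ‖ - k) / m) • e₁) l : ℂ) + I * ((-(Ξ / m)) • e₂) l := by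
    rw [hζ₂]; funext l; simp only [PiLp.smul_apply, smul_eq_mul]; push_cast; ring
  have hζ₃' : ζ₃ = fun l => (((k • e₁) l : ℝ) : ℂ) + I * (((0 : ℝ) • e₂) l : ℝ) := by
    rw [hζ₃]; funext l; simp
  have hsq : ((‖ξ‖ - k) / m) ^ 2 - (Ξ / m) ^ 2 = k ^ 2 :=
    hΞ ▸ sq_div_sub_sq_sqrt_discriminant_div hm0 hdisc.le
  have hrate : |Ξ / m| * (D / 2) = D * Ξ / (2 * m) := by
    rw [abs_of_nonneg (div_nonneg (hΞ ▸ Real.sqrt_nonneg _) (Nat.cast_nonneg m))]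
    ring
  refine ⟨hdisc, ?_, ?_, ?_, fun l => ?_, fun x hx => ⟨?_, ?_, ?_⟩⟩
  · rw [hζ₁', sum_smul_add_I_mul_smul_sq he₁_norm he₂ horth, hsq, ofReal_pow]
  · rw [hζ₂', sum_smul_add_I_mul_smul_sq he₁_norm he₂ horth, neg_sq, hsq, ofReal_pow]
  · rw [hζ₃', sum_smul_add_I_mul_smul_sq he₁_norm he₂ horth]; simp
  · have hmC : (m : ℂ) ≠ 0 := by exact_mod_cast hm0
    have he₁ξ : ‖ξ‖ * e₁ l = ξ l := by simp [he₁, mul_inv_cancel_left₀ hξ0]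
    rw [hζ₁', hζ₂', hζ₃', ← he₁ξ]
    simp only [PiLp.smul_apply, smul_eq_mul, zero_smul, PiLp.zero_apply]
    push_cast
    field_simp
    ring
  · rw [hζ₁', ← hrate]
    exact norm_exp_I_mul_sum_smul_add_I_mul_smul_mul_le he₂ _ _ hx
  · rw [hζ₂', ← hrate, ← abs_neg]
    exact norm_exp_I_mul_sum_smul_add_I_mul_smul_mul_le he₂ _ _ hx
  · rw [hζ₃', norm_exp_I_mul_sum_ofReal_add_I_mul_mul, zero_smul, inner_zero_left, neg_zero,
      Real.exp_zero]

/-- the high-frequency regime ‖ξ‖ > (m+1)k of the construction in Theorem 2.2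
(even m): the discriminant ‖ξ‖² − 2k‖ξ‖ − (m²−1)k² is positive, the complex wave vectors
ζ₁, ζ₂ (with imaginary transverse component) and the real vector ζ₃ satisfy ζ_j·ζ_j = k²
(bilinear dot product), (m/2)·ζ₁ + (m/2)·ζ₂ + ζ₃ = ξ, and the corresponding plane waves
obey |e^{iζ_j·x}| ≤ e^{DΞ/(2m)} for j = 1,2 and |e^{iζ₃·x}| = 1 on the ball ‖x‖ ≤ D/2. -/
theorem waveVectors_even_highFrequency (n m : ℕ) (hn : 2 ≤ n) (hm : 2 ≤ m) (hme : Even m)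
    (k D : ℝ) (hk : 0 < k) (hD : 0 < D) (ξ : EuclideanSpace ℝ (Fin n))
    (hξ : ((m : ℝ) + 1) * k < ‖ξ‖)
    (e₁ e₂ : EuclideanSpace ℝ (Fin n)) (he₁ : e₁ = ‖ξ‖⁻¹ • ξ)
    (he₂ : ‖e₂‖ = 1) (horth : ⟪e₁, e₂⟫ = 0)
    (Ξ : ℝ) (hΞ : Ξ = Real.sqrt (‖ξ‖ ^ 2 - 2 * k * ‖ξ‖ - ((m : ℝ) ^ 2 - 1) * k ^ 2))
    (ζ₁ ζ₂ ζ₃ : Fin n → ℂ)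
    (hζ₁ : ζ₁ = fun l => ((1 / (m : ℂ)) * (-(k : ℂ) + (‖ξ‖ : ℂ))) * (e₁ l : ℂ) +
      (Complex.I / (m : ℂ)) * (Ξ : ℂ) * (e₂ l : ℂ))
    (hζ₂ : ζ₂ = fun l => ((1 / (m : ℂ)) * (-(k : ℂ) + (‖ξ‖ : ℂ))) * (e₁ l : ℂ) -
      (Complex.I / (m : ℂ)) * (Ξ : ℂ) * (e₂ l : ℂ))
    (hζ₃ : ζ₃ = fun l => ((k * e₁ l : ℝ) : ℂ)) :
    0 < ‖ξ‖ ^ 2 - 2 * k * ‖ξ‖ - ((m : ℝ) ^ 2 - 1) * k ^ 2 ∧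
      (∑ l, ζ₁ l ^ 2 = (k : ℂ) ^ 2) ∧ (∑ l, ζ₂ l ^ 2 = (k : ℂ) ^ 2) ∧
      (∑ l, ζ₃ l ^ 2 = (k : ℂ) ^ 2) ∧
      (∀ l, ((m : ℂ) / 2) * ζ₁ l + ((m : ℂ) / 2) * ζ₂ l + ζ₃ l = (ξ l : ℂ)) ∧
      (∀ x : EuclideanSpace ℝ (Fin n), ‖x‖ ≤ D / 2 →
        ‖Complex.exp (Complex.I * ∑ l, ζ₁ l * (x l : ℂ))‖ ≤
            Real.exp (D * Ξ / (2 * m)) ∧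
          ‖Complex.exp (Complex.I * ∑ l, ζ₂ l * (x l : ℂ))‖ ≤
            Real.exp (D * Ξ / (2 * m)) ∧
          ‖Complex.exp (Complex.I * ∑ l, ζ₃ l * (x l : ℂ))‖ = 1) :=
  waveVectors_even_highFrequency_general n m hm k D hk ξ hξ e₁ e₂ he₁ he₂ horth Ξ hΞ ζ₁ ζ₂ ζ₃ hζ₁
    hζ₂ hζ₃
end
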